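/- Let P₁ = δ_{-a} and P₂ = δ_a with a > 0, and let E denote the energy distance. Among distributions of the form P = (1/2)δ_{-b} + (1/2)δ_b with b ≥ 0, the sum E(P,P₁) + E(P,P₂) is minimized at b = a, not at b = 0. In particular, the energy-distance barycenter of δ_{-a} and δ_a is not δ_0. -/

import Mathlib

/-!
Against a point mass, `E(P, δ_c) = 2 E|X - c| - E|X - X'|`, which for `P = (δ_{-b} + δ_b)/2` is
`|b + c| + |b - c| - |b|`. Summing over `c = ±a` gives `2 (|b - a| + |b + a| - |b|)`; the two
triangle inequalities `2|a|, 2|b| ≤ |b - a| + |b + a|` bound this below by `2|a|`, the value at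
`b = a`, whereas at `b = 0` it is `4|a|`.
-/

open MeasureTheory

/-- The energy distance between two measures on ℝ:
`E(P,Q) = 2 E|X-Y| - E|X-X'| - E|Y-Y'|`. -/
noncomputable def energyDist (P Q : Measure ℝ) : ℝ :=
  2 * (∫ x, ∫ y, |x - y| ∂Q ∂P) - (∫ x, ∫ y, |x - y| ∂P ∂P) -
    ∫ x, ∫ y, |x - y| ∂Q ∂Q

/-- Two-point symmetric distribution `(1/2)δ_{-b} + (1/2)δ_b`. -/
noncomputable def twoPoint (b : ℝ) : Measure ℝ :=
  (2 : ENNReal)⁻¹ • Measure.dirac (-b) + (2 : ENNReal)⁻¹ • Measure.dirac b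


lemma integral_twoPoint (b : ℝ) (f : ℝ → ℝ) :
    ∫ x, f x ∂twoPoint b = (f (-b) + f b) / 2 := by
  rw [twoPoint, integral_add_measure ((integrable_dirac (by simp)).smul_measure (by simp))
    ((integrable_dirac (by simp)).smul_measure (by simp)), integral_smul_measure,
    integral_smul_measure, integral_dirac, integral_dirac]
  simp only [ENNReal.toReal_inv, ENNReal.toReal_ofNat, smul_eq_mul]
  ring

lemma energyDist_dirac_right (P : Measure ℝ) (c : ℝ) :
    energyDist P (Measure.dirac c) =
      2 * ∫ x, |x - c| ∂P - ∫ x, ∫ y, |x - y| ∂P ∂P := by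
  simp [energyDist, integral_dirac]

lemma energyDist_twoPoint_dirac (b c : ℝ) :
    energyDist (twoPoint b) (Measure.dirac c) = |b + c| + |b - c| - |b| := by
  have h₁ : |-b - c| = |b + c| := by rw [← abs_neg]; ring_nf
  have h₂ : |b + b| = 2 * |b| := by rw [← two_mul, abs_mul, abs_two]
  have h₃ : |-b - b| = 2 * |b| := by rw [← abs_neg, neg_sub, sub_neg_eq_add, h₂]
  rw [energyDist_dirac_right]
  simp only [integral_twoPoint, sub_neg_eq_add, sub_self, abs_zero, neg_add_cancel, h₁, h₂, h₃]
  ring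

lemma energyDist_twoPoint_dirac_neg_add_energyDist_twoPoint_dirac (a b : ℝ) :
    energyDist (twoPoint b) (Measure.dirac (-a)) + energyDist (twoPoint b) (Measure.dirac a) =
      2 * (|b - a| + |b + a| - |b|) := by
  simp only [energyDist_twoPoint_dirac, ← sub_eq_add_neg, sub_neg_eq_add]
  ring

lemma abs_add_abs_le_abs_sub_add_abs_add (a b : ℝ) : |a| + |b| ≤ |b - a| + |b + a| := by
  have h₁ : 2 * |a| ≤ |b - a| + |b + a| := calc
    2 * |a| = |(b + a) - (b - a)| := by rw [← abs_two, ← abs_mul]; ring_nf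
    _ ≤ |b - a| + |b + a| := (abs_sub _ _).trans_eq (add_comm _ _)
  have h₂ : 2 * |b| ≤ |b - a| + |b + a| := calc
    2 * |b| = |(b - a) + (b + a)| := by rw [← abs_two, ← abs_mul]; ring_nf
    _ ≤ |b - a| + |b + a| := abs_add_le _ _
  linarith

theorem energy_barycenter_two_point (a : ℝ) (ha : 0 < a) :
    (∀ b : ℝ, 0 ≤ b →
      energyDist (twoPoint a) (Measure.dirac (-a)) + energyDist (twoPoint a) (Measure.dirac a)
        ≤ energyDist (twoPoint b) (Measure.dirac (-a)) +
            energyDist (twoPoint b) (Measure.dirac a)) ∧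
    energyDist (twoPoint a) (Measure.dirac (-a)) + energyDist (twoPoint a) (Measure.dirac a)
      < energyDist (twoPoint 0) (Measure.dirac (-a)) +
          energyDist (twoPoint 0) (Measure.dirac a) := by
  have h_sum := energyDist_twoPoint_dirac_neg_add_energyDist_twoPoint_dirac a
  have h_at_a : |a - a| + |a + a| - |a| = |a| := by
    rw [sub_self, abs_zero, ← two_mul, abs_mul, abs_two]; ring
  have h_at_zero : |0 - a| + |0 + a| - |0| = 2 * |a| := by
    rw [zero_sub, zero_add, abs_neg, abs_zero]; ring
  refine ⟨fun b _ => ?_, ?_⟩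
  · rw [h_sum, h_sum, h_at_a]
    linarith [abs_add_abs_le_abs_sub_add_abs_add a b]
  · rw [h_sum, h_sum, h_at_a, h_at_zero]
    linarith [abs_pos.2 ha.ne']
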